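/- Let n ≥ 2 and let p, q ≥ 0 be integers. For every integer k ≥ 0 and all z ∈ ℂⁿ: if k ≥ p then (Z̃₁^*)^p (Z̃₂)^q φ_k^{n−1}(z) = (−2)^{−p−q} z₁^p \overline{z_2}^q φ_{k−p}^{n+p+q−1}(z), and if k < p then (Z̃₁^*)^p (Z̃₂)^q φ_k^{n−1} ≡ 0. -/

import Mathlib

open MeasureTheory Complex Finset Metric

noncomputable section

/-- `ℂⁿ` as a Euclidean space. -/
abbrev Cn (n : ℕ) := EuclideanSpace ℂ (Fin n)

instance (n : ℕ) : MeasurableSpace (Cn n) := inferInstanceAs (MeasurableSpace (WithLp 2 (Fin n → ℂ)))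
instance (n : ℕ) : BorelSpace (Cn n) := inferInstanceAs (BorelSpace (PiLp 2 fun _ : Fin n => ℂ))
instance (n : ℕ) : MeasureSpace (Cn n) := ⟨(volume : Measure (Fin n → ℂ)).map (WithLp.toLp 2)⟩

/-- The Laguerre polynomial of degree `k` and order `α`:
`L_k^α(x) = Σ_{i=0}^k (−1)^i ((α+k)!/((k−i)!(α+i)! i!)) x^i`. -/
def laguerreL (k α : ℕ) (x : ℝ) : ℝ :=
  ∑ i ∈ Finset.range (k + 1),
    (-1 : ℝ) ^ i * ((α + k).factorial : ℝ) /
      (((k - i).factorial : ℝ) * ((α + i).factorial : ℝ) * (i.factorial : ℝ)) * x ^ i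

/-- The Laguerre function `φ_k^ν(z) = L_k^ν(|z|²/2) e^{−|z|²/4}` on `ℂⁿ`. -/
def phiFn (n k ν : ℕ) (z : Cn n) : ℂ :=
  ((laguerreL k ν (‖z‖ ^ 2 / 2) * Real.exp (-‖z‖ ^ 2 / 4) : ℝ) : ℂ)

/-- The radial profile `φ_k^ν(r) = L_k^ν(r²/2) e^{−r²/4}`. -/
def phiRad (k ν : ℕ) (r : ℝ) : ℝ :=
  laguerreL k ν (r ^ 2 / 2) * Real.exp (-r ^ 2 / 4)

/-- Directional derivative `∂/∂x_j`. -/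
def pdx (n : ℕ) (j : Fin n) (f : Cn n → ℂ) (z : Cn n) : ℂ :=
  fderiv ℝ f z (EuclideanSpace.single j 1)

/-- Directional derivative `∂/∂y_j`. -/
def pdy (n : ℕ) (j : Fin n) (f : Cn n → ℂ) (z : Cn n) : ℂ :=
  fderiv ℝ f z (EuclideanSpace.single j Complex.I)

/-- The operator `Z̃_j = ∂/∂z_j − (1/4) z̄_j`, where
`∂/∂z_j = (1/2)(∂/∂x_j − i ∂/∂y_j)`. -/
def Zt (n : ℕ) (j : Fin n) (f : Cn n → ℂ) : Cn n → ℂ := fun z =>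
  (1 / 2 : ℂ) * (pdx n j f z - Complex.I * pdy n j f z) -
    (1 / 4 : ℂ) * (starRingEnd ℂ) (z j) * f z

/-- The operator `Z̃_j^* = ∂/∂z̄_j + (1/4) z_j`, where
`∂/∂z̄_j = (1/2)(∂/∂x_j + i ∂/∂y_j)`. -/
def ZtStar (n : ℕ) (j : Fin n) (f : Cn n → ℂ) : Cn n → ℂ := fun z =>
  (1 / 2 : ℂ) * (pdx n j f z + Complex.I * pdy n j f z) +
    (1 / 4 : ℂ) * z j * f z

/-- The polynomial `P(z) = Σ_{|α|=p, |β|=q} c_{αβ} z^α z̄^β` on `ℂⁿ`. -/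
def bigraded (n p q : ℕ) (c : (Fin n → ℕ) → (Fin n → ℕ) → ℂ) (z : Cn n) : ℂ :=
  ∑ α ∈ Finset.Nat.antidiagonalTuple n p, ∑ β ∈ Finset.Nat.antidiagonalTuple n q,
    c α β * (∏ j, z j ^ α j) * (∏ j, (starRingEnd ℂ) (z j) ^ β j)

/-- The Laplacian on `ℝ^{2n} ≅ ℂⁿ`. -/
def lap (n : ℕ) (f : Cn n → ℂ) (z : Cn n) : ℂ :=
  ∑ j : Fin n,
    (fderiv ℝ (fun w => fderiv ℝ f w (EuclideanSpace.single j 1)) z (EuclideanSpace.single j 1) +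
      fderiv ℝ (fun w => fderiv ℝ f w (EuclideanSpace.single j Complex.I)) z
        (EuclideanSpace.single j Complex.I))

/-- The twisted convolution `f × g(z) = ∫ f(z−w) g(w) e^{(i/2) Im(z·w̄)} dw`. -/
def twConv (n : ℕ) (f g : Cn n → ℂ) (z : Cn n) : ℂ :=
  ∫ w : Cn n,
    f (z - w) * g w *
      Complex.exp (Complex.I / 2 * (((∑ j, z j * (starRingEnd ℂ) (w j)).im : ℝ) : ℂ))

/-- The normalized surface measure `μ_r` on the sphere of radius `r` centered at the
origin, realized as the pushforward of the normalized surface measure of the unit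
sphere under scaling by `r`. -/
def muSph (n : ℕ) (r : ℝ) : Measure (Cn n) :=
  ((volume : Measure (Cn n)).toSphere Set.univ)⁻¹ •
    Measure.map (fun ω : sphere (0 : Cn n) 1 => r • (ω : Cn n))
      (volume : Measure (Cn n)).toSphere

/-- The weighted twisted spherical mean
`f × gμ_r(z) = ∫_{S_r(o)} f(z−w) g(w) e^{(i/2) Im(z·w̄)} dμ_r(w)`. -/
def twSphMean (n : ℕ) (f g : Cn n → ℂ) (r : ℝ) (z : Cn n) : ℂ :=
  ∫ w,
    f (z - w) * g w *
      Complex.exp (Complex.I / 2 * (((∑ j, z j * (starRingEnd ℂ) (w j)).im : ℝ) : ℂ))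
      ∂(muSph n r)

/-- The twisted spherical mean `f × μ_r(z) = ∫_{S_r(o)} f(z−w) e^{(i/2) Im(z·w̄)} dμ_r(w)`. -/
def tsMean (n : ℕ) (f : Cn n → ℂ) (r : ℝ) (z : Cn n) : ℂ :=
  ∫ w,
    f (z - w) *
      Complex.exp (Complex.I / 2 * (((∑ j, z j * (starRingEnd ℂ) (w j)).im : ℝ) : ℂ))
      ∂(muSph n r)

/-- Ordered product of iterated operators: `(T_1)^{α_1} ∘ ⋯ ∘ (T_n)^{α_n}`. -/
def multiOp (n : ℕ) (T : Fin n → (Cn n → ℂ) → Cn n → ℂ) (α : Fin n → ℕ) :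
    (Cn n → ℂ) → Cn n → ℂ :=
  (List.ofFn fun j : Fin n => (T j)^[α j]).foldr (· ∘ ·) id

/-- The operator `P(A) = Σ c_{αβ} (A^*)^α A^β` attached to a bigraded polynomial. -/
def polyOp (n p q : ℕ) (c : (Fin n → ℕ) → (Fin n → ℕ) → ℂ)
    (Astar A : Fin n → (Cn n → ℂ) → Cn n → ℂ) (f : Cn n → ℂ) (z : Cn n) : ℂ :=
  ∑ α ∈ Finset.Nat.antidiagonalTuple n p, ∑ β ∈ Finset.Nat.antidiagonalTuple n q,
    c α β * multiOp n Astar α (multiOp n A β f) z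

/-!
Consider functions `z_{j₀}^a z̄_{j₁}^b R(|z|²)` with `j₀ ≠ j₁` and a profile `R : ℝ → ℂ`.
Computing Wirtinger derivatives, `Z̃_{j₁}` turns such a function into
`z_{j₀}^a z̄_{j₁}^(b+1) (R' - R/4)(|z|²)` and `Z̃_{j₀}^*` into `z_{j₀}^(a+1) z̄_{j₁}^b (R' + R/4)(|z|²)`.
For the Laguerre profile `R_k^ν(s) = L_k^ν(s/2) e^{-s/4}` one has `R' = R_k^ν/4 - R_k^{ν+1}/2`,
because `(L_k^ν)' = L_k^ν - L_k^{ν+1}`. Hence `Z̃_{j₁}` maps `R_k^ν` to `-R_k^{ν+1}/2`, while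
`Z̃_{j₀}^*` maps it to `(R_k^ν - R_k^{ν+1})/2`, which is `-R_{k-1}^{ν+1}/2` by the Pascal-type
recurrence `L_{k+1}^{ν+1} = L_{k+1}^ν + L_k^{ν+1}`, and `0` when `k = 0`.
-/

open scoped Nat

theorem laguerreL_eq_sum_choose (k α : ℕ) (x : ℝ) :
    laguerreL k α x =
      ∑ i ∈ range (k + 1), (-1 : ℝ) ^ i * (α + k).choose (k - i) / i ! * x ^ i := by
  refine sum_congr rfl fun i hi => ?_
  have hik : i ≤ k := Nat.lt_succ_iff.mp (mem_range.mp hi)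
  rw [Nat.cast_choose ℝ (by omega : k - i ≤ α + k), show α + k - (k - i) = α + i by omega]
  field_simp

theorem laguerreL_zero_left (α : ℕ) (x : ℝ) : laguerreL 0 α x = 1 := by
  simp [laguerreL_eq_sum_choose]

theorem laguerreL_succ_succ (k α : ℕ) (x : ℝ) :
    laguerreL (k + 1) (α + 1) x = laguerreL (k + 1) α x + laguerreL k (α + 1) x := by
  simp only [laguerreL_eq_sum_choose]
  rw [sum_range_succ, sum_range_succ _ (k + 1), Nat.sub_self, Nat.choose_zero_right,
    Nat.choose_zero_right, add_right_comm (∑ i ∈ range (k + 1), _), ← sum_add_distrib]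
  congr 1
  refine sum_congr rfl fun i hi => ?_
  have hik : i ≤ k := Nat.lt_succ_iff.mp (mem_range.mp hi)
  rw [show α + 1 + (k + 1) = (α + 1 + k) + 1 by omega, show k + 1 - i = (k - i) + 1 by omega,
    Nat.choose_succ_succ', show α + (k + 1) = α + 1 + k by omega]
  push_cast
  ring

theorem hasDerivAt_laguerreL_succ (k α : ℕ) (x : ℝ) :
    HasDerivAt (laguerreL (k + 1) α) (-laguerreL k (α + 1) x) x := by
  have h := HasDerivAt.fun_sum (u := range (k + 2)) (x := x) fun i _ =>
    (hasDerivAt_pow i x).const_mul ((-1 : ℝ) ^ i * (α + (k + 1)).choose (k + 1 - i) / i !)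
  rw [show laguerreL (k + 1) α = _ from funext (laguerreL_eq_sum_choose (k + 1) α)]
  refine h.congr_deriv ?_
  rw [sum_range_succ', laguerreL_eq_sum_choose, ← sum_neg_distrib]
  simp only [CharP.cast_eq_zero, zero_mul, mul_zero, add_zero]
  refine sum_congr rfl fun i _ => ?_
  rw [Nat.factorial_succ, show α + (k + 1) = α + 1 + k by omega, Nat.add_sub_add_right,
    Nat.add_sub_cancel]
  push_cast
  field_simp
  ring

theorem hasDerivAt_laguerreL (k α : ℕ) (x : ℝ) :
    HasDerivAt (laguerreL k α) (laguerreL k α x - laguerreL k (α + 1) x) x := by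
  cases k with
  | zero =>
    rw [show laguerreL 0 α = fun _ => 1 from funext (laguerreL_zero_left α), laguerreL_zero_left,
      sub_self]
    exact hasDerivAt_const x 1
  | succ k =>
    rw [laguerreL_succ_succ, sub_add_cancel_left]
    exact hasDerivAt_laguerreL_succ k α x

def laguerreProfile (k α : ℕ) (s : ℝ) : ℂ :=
  ((laguerreL k α (s / 2) * Real.exp (-s / 4) : ℝ) : ℂ)

theorem laguerreProfile_succ_succ (k α : ℕ) (s : ℝ) :
    laguerreProfile (k + 1) (α + 1) s =
      laguerreProfile (k + 1) α s + laguerreProfile k (α + 1) s := by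
  simp only [laguerreProfile, laguerreL_succ_succ]
  push_cast
  ring

theorem laguerreProfile_zero_left_succ (α : ℕ) :
    laguerreProfile 0 (α + 1) = laguerreProfile 0 α := by
  funext s
  simp only [laguerreProfile, laguerreL_zero_left]

theorem hasDerivAt_laguerreProfile (k α : ℕ) (s : ℝ) :
    HasDerivAt (laguerreProfile k α)
      (laguerreProfile k α s / 4 - laguerreProfile k (α + 1) s / 2) s := by
  have hL := (hasDerivAt_laguerreL k α (s / 2)).comp s ((hasDerivAt_id s).div_const 2)
  have hE := (Real.hasDerivAt_exp (-s / 4)).comp s ((hasDerivAt_id s).neg.div_const 4)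
  refine (hL.mul hE).ofReal_comp.congr_deriv ?_
  simp only [laguerreProfile, Function.comp_apply, Pi.neg_apply, id]
  push_cast
  ring

section Wirtinger

variable {n : ℕ} {j : Fin n} {f : Cn n → ℂ} {z : Cn n} {A B : ℂ}

/- `A` and `B` are the Wirtinger derivatives `∂f/∂z_j` and `∂f/∂z̄_j` at `z`. -/
theorem Zt_apply_of_fderiv_single
    (hf : ∀ c : ℂ, fderiv ℝ f z (EuclideanSpace.single j c) = A * c + B * starRingEnd ℂ c) :
    Zt n j f z = A - 1 / 4 * starRingEnd ℂ (z j) * f z := by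
  simp only [Zt, pdx, pdy, hf, map_one, conj_I]
  linear_combination (B - A) / 2 * I_sq

theorem ZtStar_apply_of_fderiv_single
    (hf : ∀ c : ℂ, fderiv ℝ f z (EuclideanSpace.single j c) = A * c + B * starRingEnd ℂ c) :
    ZtStar n j f z = B + 1 / 4 * z j * f z := by
  simp only [ZtStar, pdx, pdy, hf, map_one, conj_I]
  linear_combination (A - B) / 2 * I_sq

end Wirtinger

theorem ZtStar_zero {n : ℕ} (j : Fin n) : ZtStar n j 0 = 0 := by
  funext z
  simp [ZtStar, pdx, pdy]

theorem two_mul_real_inner_single {n : ℕ} (z : Cn n) (j : Fin n) (c : ℂ) :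
    2 * (inner ℝ z (EuclideanSpace.single j c) : ℂ) =
      starRingEnd ℂ (z j) * c + z j * starRingEnd ℂ c := by
  rw [PiLp.inner_apply, sum_eq_single j (fun i _ hi => by simp [hi]) (by simp),
    PiLp.single_eq_same, Complex.inner, re_eq_add_conj, map_mul, conj_conj]
  ring

theorem hasFDerivAt_apply_pow {n : ℕ} (j : Fin n) (a : ℕ) (z : Cn n) :
    HasFDerivAt (fun w : Cn n => w j ^ a)
      ((a * z j ^ (a - 1)) • (EuclideanSpace.proj j : Cn n →L[ℂ] ℂ).restrictScalars ℝ) z :=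
  (hasDerivAt_pow a (z j)).comp_hasFDerivAt z
    ((EuclideanSpace.proj j : Cn n →L[ℂ] ℂ).restrictScalars ℝ).hasFDerivAt

theorem hasFDerivAt_conj_apply_pow {n : ℕ} (j : Fin n) (b : ℕ) (z : Cn n) :
    HasFDerivAt (fun w : Cn n => starRingEnd ℂ (w j) ^ b)
      ((b * starRingEnd ℂ (z j) ^ (b - 1)) • (conjCLE.toContinuousLinearMap.comp
        ((EuclideanSpace.proj j : Cn n →L[ℂ] ℂ).restrictScalars ℝ))) z :=
  (hasDerivAt_pow b (starRingEnd ℂ (z j))).comp_hasFDerivAt z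
    (conjCLE.toContinuousLinearMap.comp
        ((EuclideanSpace.proj j : Cn n →L[ℂ] ℂ).restrictScalars ℝ)).hasFDerivAt

def radialMonomial {n : ℕ} (j₀ j₁ : Fin n) (a b : ℕ) (R : ℝ → ℂ) (w : Cn n) : ℂ :=
  w j₀ ^ a * starRingEnd ℂ (w j₁) ^ b * R (‖w‖ ^ 2)

section RadialMonomial

variable {n : ℕ} {j₀ j₁ : Fin n} (a b : ℕ)

theorem fderiv_radialMonomial_single {R : ℝ → ℂ} {R' : ℂ} {z : Cn n}
    (hR : HasDerivAt R R' (‖z‖ ^ 2)) (j : Fin n) (c : ℂ) :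
    fderiv ℝ (radialMonomial j₀ j₁ a b R) z (EuclideanSpace.single j c) =
      ((if j₀ = j then a * z j₀ ^ (a - 1) * starRingEnd ℂ (z j₁) ^ b * R (‖z‖ ^ 2) else 0) +
          z j₀ ^ a * starRingEnd ℂ (z j₁) ^ b * R' * starRingEnd ℂ (z j)) * c +
        ((if j₁ = j then z j₀ ^ a * b * starRingEnd ℂ (z j₁) ^ (b - 1) * R (‖z‖ ^ 2) else 0) +
          z j₀ ^ a * starRingEnd ℂ (z j₁) ^ b * R' * z j) * starRingEnd ℂ c := by
  have hN := hR.hasFDerivAt.comp z (hasStrictFDerivAt_norm_sq z).hasFDerivAt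
  have h := ((hasFDerivAt_apply_pow j₀ a z).mul (hasFDerivAt_conj_apply_pow j₁ b z)).mul hN
  rw [HasFDerivAt.fderiv (f := radialMonomial j₀ j₁ a b R) h]
  simp only [Pi.mul_apply, ContinuousLinearMap.comp_smul, Function.comp_apply, smul_add,
    add_apply, smul_apply, ContinuousLinearMap.comp_apply, coe_innerSL_apply,
    ContinuousLinearMap.toSpanSingleton_apply, real_smul, nsmul_eq_mul, Nat.cast_ofNat,
    smul_eq_mul, ContinuousLinearMap.coe_restrictScalars', PiLp.proj_apply, PiLp.single_apply,
    ContinuousLinearEquiv.coe_coe, ContinuousAlgEquiv.coeCLE_apply, conjCAE_apply,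
    apply_ite (starRingEnd ℂ), map_zero]
  have hinner := two_mul_real_inner_single z j c
  split_ifs <;> linear_combination (z j₀ ^ a * starRingEnd ℂ (z j₁) ^ b * R') * hinner

variable {R R' : ℝ → ℂ}

theorem Zt_radialMonomial (h : j₀ ≠ j₁) (hR : ∀ s, HasDerivAt R (R' s) s) :
    Zt n j₁ (radialMonomial j₀ j₁ a b R) =
      radialMonomial j₀ j₁ a (b + 1) (fun s => R' s - R s / 4) := by
  funext z
  rw [Zt_apply_of_fderiv_single (fderiv_radialMonomial_single a b (hR _) j₁), if_neg h]
  simp only [radialMonomial]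
  ring

theorem ZtStar_radialMonomial (h : j₀ ≠ j₁) (hR : ∀ s, HasDerivAt R (R' s) s) :
    ZtStar n j₀ (radialMonomial j₀ j₁ a b R) =
      radialMonomial j₀ j₁ (a + 1) b (fun s => R' s + R s / 4) := by
  funext z
  rw [ZtStar_apply_of_fderiv_single (fderiv_radialMonomial_single a b (hR _) j₀), if_neg h.symm]
  simp only [radialMonomial]
  ring

end RadialMonomial

theorem phiFn_eq_radialMonomial {n : ℕ} (j₀ j₁ : Fin n) (k α : ℕ) :
    phiFn n k α = radialMonomial j₀ j₁ 0 0 (fun s => 1 * laguerreProfile k α s) := by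
  funext z
  simp [phiFn, radialMonomial, laguerreProfile]

section LaguerreLadder

variable {n : ℕ} {j₀ j₁ : Fin n} (a b : ℕ) (c : ℂ)

theorem Zt_radialMonomial_laguerre (h : j₀ ≠ j₁) (k α : ℕ) :
    Zt n j₁ (radialMonomial j₀ j₁ a b (fun s => c * laguerreProfile k α s)) =
      radialMonomial j₀ j₁ a (b + 1) (fun s => -c / 2 * laguerreProfile k (α + 1) s) := by
  rw [Zt_radialMonomial a b h fun s => (hasDerivAt_laguerreProfile k α s).const_mul c]
  congr 1
  funext s
  ring

theorem ZtStar_radialMonomial_laguerre_succ (h : j₀ ≠ j₁) (k α : ℕ) :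
    ZtStar n j₀ (radialMonomial j₀ j₁ a b (fun s => c * laguerreProfile (k + 1) α s)) =
      radialMonomial j₀ j₁ (a + 1) b (fun s => -c / 2 * laguerreProfile k (α + 1) s) := by
  rw [ZtStar_radialMonomial a b h fun s => (hasDerivAt_laguerreProfile (k + 1) α s).const_mul c]
  congr 1
  funext s
  rw [laguerreProfile_succ_succ]
  ring

theorem ZtStar_radialMonomial_laguerre_zero (h : j₀ ≠ j₁) (α : ℕ) :
    ZtStar n j₀ (radialMonomial j₀ j₁ a b (fun s => c * laguerreProfile 0 α s)) = 0 := by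
  rw [ZtStar_radialMonomial a b h fun s => (hasDerivAt_laguerreProfile 0 α s).const_mul c]
  funext z
  simp only [radialMonomial, laguerreProfile_zero_left_succ, Pi.zero_apply]
  ring

theorem iterate_Zt_radialMonomial_laguerre (h : j₀ ≠ j₁) (k α q : ℕ) :
    (Zt n j₁)^[q] (radialMonomial j₀ j₁ a b (fun s => c * laguerreProfile k α s)) =
      radialMonomial j₀ j₁ a (b + q)
        (fun s => (-1 / 2) ^ q * c * laguerreProfile k (α + q) s) := by
  induction q with
  | zero => simp
  | succ q ih =>
    rw [Function.iterate_succ_apply', ih, Zt_radialMonomial_laguerre _ _ _ h, ← add_assoc,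
      ← add_assoc]
    congr 1
    funext s
    ring

theorem iterate_ZtStar_radialMonomial_laguerre (h : j₀ ≠ j₁) (k α p : ℕ) :
    (ZtStar n j₀)^[p] (radialMonomial j₀ j₁ a b (fun s => c * laguerreProfile (k + p) α s)) =
      radialMonomial j₀ j₁ (a + p) b
        (fun s => (-1 / 2) ^ p * c * laguerreProfile k (α + p) s) := by
  induction p generalizing k with
  | zero => simp
  | succ p ih =>
    rw [show k + (p + 1) = k + 1 + p by omega, Function.iterate_succ_apply', ih (k + 1),
      ZtStar_radialMonomial_laguerre_succ _ _ _ h, ← add_assoc, ← add_assoc]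
    congr 1
    funext s
    ring

theorem iterate_ZtStar_radialMonomial_laguerre_of_lt (h : j₀ ≠ j₁) {k p : ℕ} (α : ℕ)
    (hkp : k < p) :
    (ZtStar n j₀)^[p] (radialMonomial j₀ j₁ a b (fun s => c * laguerreProfile k α s)) = 0 := by
  obtain ⟨m, rfl⟩ : ∃ m, p = m + (k + 1) := ⟨p - (k + 1), by omega⟩
  have hk := iterate_ZtStar_radialMonomial_laguerre a b c h 0 α k
  rw [zero_add] at hk
  rw [Function.iterate_add_apply, Function.iterate_succ_apply', hk,
    ZtStar_radialMonomial_laguerre_zero _ _ _ h, Function.iterate_fixed (ZtStar_zero j₀)]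

end LaguerreLadder

theorem stmt1 (n p q : ℕ) (hn : 2 ≤ n) (k : ℕ) :
    (p ≤ k → ∀ z : Cn n,
        (ZtStar n ⟨0, by omega⟩)^[p] ((Zt n ⟨1, by omega⟩)^[q] (phiFn n k (n - 1))) z =
          (-2 : ℂ) ^ (-(p : ℤ) - (q : ℤ)) * z ⟨0, by omega⟩ ^ p *
            (starRingEnd ℂ) (z ⟨1, by omega⟩) ^ q * phiFn n (k - p) (n + p + q - 1) z) ∧
    (k < p → ∀ z : Cn n,
        (ZtStar n ⟨0, by omega⟩)^[p] ((Zt n ⟨1, by omega⟩)^[q] (phiFn n k (n - 1))) z = 0) := by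
  have h : (⟨0, by omega⟩ : Fin n) ≠ ⟨1, by omega⟩ := by simp
  rw [phiFn_eq_radialMonomial ⟨0, by omega⟩ ⟨1, by omega⟩,
    iterate_Zt_radialMonomial_laguerre _ _ _ h]
  refine ⟨fun hpk z => ?_, fun hkp z => ?_⟩
  · obtain ⟨m, rfl⟩ : ∃ m, k = m + p := ⟨k - p, by omega⟩
    have hconst : (-1 / 2 : ℂ) ^ p * ((-1 / 2) ^ q * 1) = (-2) ^ (-(p : ℤ) - (q : ℤ)) := by
      rw [show -(p : ℤ) - q = -((p + q : ℕ) : ℤ) by push_cast; ring, zpow_neg, zpow_natCast,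
        ← inv_pow, pow_add]
      norm_num
    rw [iterate_ZtStar_radialMonomial_laguerre _ _ _ h, Nat.add_sub_cancel,
      phiFn_eq_radialMonomial ⟨0, by omega⟩ ⟨1, by omega⟩,
      show n + p + q - 1 = n - 1 + q + p by omega]
    simp only [radialMonomial, ← hconst]
    ring
  · rw [iterate_ZtStar_radialMonomial_laguerre_of_lt _ _ _ h _ hkp, Pi.zero_apply]
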